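/- Let S ⊆ [m] × [n] with G_S doubly chordal bipartite, fix a column j₀, and let D_α, D_β be maximal cliques meeting column j₀ with D_α ⋖ D_β in P(j₀). Define R_α = {D ∈ Max(S) : D ∩ N_{j₀} ≠ ∅ and rows(D) ⊆ rows(D_α)} ∪ {E ∈ Max(S) : N_{j₀} ∩ D_α ∩ E = ∅} and R̄_β = {D ∈ Max(S) : D ∩ N_{j₀} ≠ ∅ and rows(D) ⊊ rows(D_β)} ∪ {E ∈ Max(S) : N_{j₀} ∩ D_β ∩ E = ∅}. Then R_α = R̄_β. -/
import Mathlib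


open Finset

open scoped Classical

/-- The bipartite graph associated to `S ⊆ [m] × [n]`. -/
def qiGraph (m n : ℕ) (S : Finset (Fin m × Fin n)) : SimpleGraph (Fin m ⊕ Fin n) :=
  SimpleGraph.fromRel (fun a b =>
    ∃ p : Fin m × Fin n, p ∈ S ∧ a = Sum.inl p.1 ∧ b = Sum.inr p.2)

/-- A chord of a closed walk: an edge of `G` between vertices of the walk that is not
an edge of the walk. -/
def IsChord {V : Type*} (G : SimpleGraph V) {v : V} (c : G.Walk v v) (e : Sym2 V) : Prop :=
  e ∈ G.edgeSet ∧ e ∉ c.edges ∧ ∀ x ∈ e, x ∈ c.support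

/-- Every cycle of length at least 6 has at least one chord. -/
def ChordalBipartite {V : Type*} (G : SimpleGraph V) : Prop :=
  ∀ (v : V) (c : G.Walk v v), c.IsCycle → 6 ≤ c.length → ∃ e : Sym2 V, IsChord G c e

/-- Every cycle of length at least 6 has at least two chords. -/
def DoublyChordalBipartite {V : Type*} (G : SimpleGraph V) : Prop :=
  ∀ (v : V) (c : G.Walk v v), c.IsCycle → 6 ≤ c.length →
    ∃ e₁ e₂ : Sym2 V, e₁ ≠ e₂ ∧ IsChord G c e₁ ∧ IsChord G c e₂

variable {m n : ℕ}

/-- A (nonempty) clique in `S`: a subset of `S` of the form `R × T`. -/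
def IsGridClique (S C : Finset (Fin m × Fin n)) : Prop :=
  C.Nonempty ∧ C ⊆ S ∧ ∀ p ∈ C, ∀ q ∈ C, (p.1, q.2) ∈ C

/-- A maximal clique in `S`. -/
def IsMaxClique (S C : Finset (Fin m × Fin n)) : Prop :=
  IsGridClique S C ∧ ∀ C', IsGridClique S C' → C ⊆ C' → C = C'

/-- `Max(S)`: the set of maximal cliques of `S`. -/
noncomputable def maxCliques (S : Finset (Fin m × Fin n)) : Finset (Finset (Fin m × Fin n)) :=
  S.powerset.filter (IsMaxClique S)

/-- `Max(x)`: maximal cliques containing the index `x`. -/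
noncomputable def maxCliquesAt (S : Finset (Fin m × Fin n)) (x : Fin m × Fin n) :
    Finset (Finset (Fin m × Fin n)) :=
  (maxCliques S).filter (fun D => x ∈ D)

/-- Pairwise intersections of distinct maximal cliques of `S`. -/
noncomputable def pairInts (S : Finset (Fin m × Fin n)) : Finset (Finset (Fin m × Fin n)) :=
  ((maxCliques S ×ˢ maxCliques S).filter (fun P => P.1 ≠ P.2)).image (fun P => P.1 ∩ P.2)

/-- `Int(S)`: containment-maximal pairwise intersections of maximal cliques of `S`. -/
noncomputable def maxInts (S : Finset (Fin m × Fin n)) : Finset (Finset (Fin m × Fin n)) :=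
  (pairInts S).filter (fun C => ∀ C' ∈ pairInts S, C ⊆ C' → C = C')

/-- Pairwise intersections of distinct elements of `Max(x)`. -/
noncomputable def pairIntsAt (S : Finset (Fin m × Fin n)) (x : Fin m × Fin n) :
    Finset (Finset (Fin m × Fin n)) :=
  ((maxCliquesAt S x ×ˢ maxCliquesAt S x).filter (fun P => P.1 ≠ P.2)).image
    (fun P => P.1 ∩ P.2)

/-- `Int(x)`: containment-maximal pairwise intersections of elements of `Max(x)`. -/
noncomputable def maxIntsAt (S : Finset (Fin m × Fin n)) (x : Fin m × Fin n) :
    Finset (Finset (Fin m × Fin n)) :=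
  (pairIntsAt S x).filter (fun C => ∀ C' ∈ pairIntsAt S x, C ⊆ C' → C = C')

/-- The rows of column `j` that are also nonzero rows of column `j₀`. -/
noncomputable def colRows (S : Finset (Fin m × Fin n)) (j₀ j : Fin n) : Finset (Fin m) :=
  Finset.univ.filter (fun i => (i, j) ∈ S ∧ (i, j₀) ∈ S)

/-- The clique induced by the block (w.r.t. column `j₀`) of the column `j`. -/
noncomputable def inducedClique (S : Finset (Fin m × Fin n)) (j₀ j : Fin n) :
    Finset (Fin m × Fin n) :=
  Finset.univ.filter (fun p => p.1 ∈ colRows S j₀ j ∧ colRows S j₀ j ⊆ colRows S j₀ p.2)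

/-- The row indices of a subset of `S`. -/
noncomputable def rowsOf (D : Finset (Fin m × Fin n)) : Finset (Fin m) := D.image Prod.fst

/-- An element of the poset `P(j₀)`: a maximal clique of `S` meeting column `j₀`. -/
def PNode (S : Finset (Fin m × Fin n)) (j₀ : Fin n) (D : Finset (Fin m × Fin n)) : Prop :=
  IsMaxClique S D ∧ ∃ i, (i, j₀) ∈ D

/-- `PCovers S j₀ Dβ Dα` means `Dα ⋖ Dβ` in the poset `P(j₀)` (ordered by
containment of row sets). -/
def PCovers (S : Finset (Fin m × Fin n)) (j₀ : Fin n) (Dβ Dα : Finset (Fin m × Fin n)) : Prop :=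
  PNode S j₀ Dα ∧ PNode S j₀ Dβ ∧ rowsOf Dα ⊂ rowsOf Dβ ∧
    ¬ ∃ Dγ, PNode S j₀ Dγ ∧ rowsOf Dα ⊂ rowsOf Dγ ∧ rowsOf Dγ ⊂ rowsOf Dβ

/-- `C⁺`: the sum of the entries of `u` indexed by `C`. -/
def cliqueSum (u : Fin m × Fin n → ℝ) (C : Finset (Fin m × Fin n)) : ℝ := ∑ x ∈ C, u x

/-- `u_{i+}`: the `i`-th row marginal of `u` over `S`. -/
noncomputable def rowMarg (S : Finset (Fin m × Fin n)) (u : Fin m × Fin n → ℝ) (i : Fin m) : ℝ :=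
  ∑ x ∈ S.filter (fun x => x.1 = i), u x

/-- `u_{+j}`: the `j`-th column marginal of `u` over `S`. -/
noncomputable def colMarg (S : Finset (Fin m × Fin n)) (u : Fin m × Fin n → ℝ) (j : Fin n) : ℝ :=
  ∑ x ∈ S.filter (fun x => x.2 = j), u x

/-- `u_{++}`: the total sum of `u` over `S`. -/
def totalSum (S : Finset (Fin m × Fin n)) (u : Fin m × Fin n → ℝ) : ℝ := ∑ x ∈ S, u x

section Aux

variable {S : Finset (Fin m × Fin n)}

lemma qi_adj {i : Fin m} {j : Fin n} (h : (i, j) ∈ S) :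
    (qiGraph m n S).Adj (Sum.inl i) (Sum.inr j) := by
  rw [qiGraph, SimpleGraph.fromRel_adj]
  exact ⟨by simp, Or.inl ⟨(i, j), h, rfl, rfl⟩⟩

lemma key (hS : DoublyChordalBipartite (qiGraph m n S)) {j₀ a b : Fin n} {i i₂ i₃ : Fin m}
    (h1 : (i, j₀) ∈ S) (h2 : (i₂, j₀) ∈ S) (h3 : (i₃, j₀) ∈ S)
    (h4 : (i, a) ∈ S) (h5 : (i₂, a) ∈ S) (h6 : (i, b) ∈ S) (h7 : (i₃, b) ∈ S) :
    (i₂, b) ∈ S ∨ (i₃, a) ∈ S := by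
  by_cases hii2 : i = i₂
  · subst hii2; exact Or.inl h6
  by_cases hii3 : i = i₃
  · subst hii3; exact Or.inr h4
  by_cases h23 : i₂ = i₃
  · subst h23; exact Or.inl h7
  by_cases haj : a = j₀
  · subst haj; exact Or.inr h3
  by_cases hbj : b = j₀
  · subst hbj; exact Or.inl h2
  by_cases hab : a = b
  · subst hab; exact Or.inl h5
  -- the 6-cycle i₂ - j₀ - i₃ - b - i - a - i₂
  let c : (qiGraph m n S).Walk (Sum.inl i₂) (Sum.inl i₂) :=
    .cons (qi_adj h2) (.cons (qi_adj h3).symm (.cons (qi_adj h7)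
      (.cons (qi_adj h6).symm (.cons (qi_adj h4) (.cons (qi_adj h5).symm .nil)))))
  have hsupp : c.support = [Sum.inl i₂, Sum.inr j₀, Sum.inl i₃, Sum.inr b,
      Sum.inl i, Sum.inr a, Sum.inl i₂] := rfl
  have hedges : c.edges = [s(Sum.inl i₂, Sum.inr j₀), s(Sum.inr j₀, Sum.inl i₃),
      s(Sum.inl i₃, Sum.inr b), s(Sum.inr b, Sum.inl i), s(Sum.inl i, Sum.inr a),
      s(Sum.inr a, Sum.inl i₂)] := rfl
  have hcyc : c.IsCycle := by
    rw [SimpleGraph.Walk.isCycle_def]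
    refine ⟨⟨?_⟩, by simp [c], ?_⟩
    · rw [hedges]
      simp [List.nodup_cons, Sym2.eq_iff]
      tauto
    · rw [hsupp]
      simp [List.nodup_cons]
      tauto
  have hlen : 6 ≤ c.length := by
    have : c.length = 6 := rfl
    omega
  obtain ⟨e₁, e₂, hne, hc₁, hc₂⟩ := hS _ c hcyc hlen
  have core : ∀ (x : Fin m) (y : Fin n), (x, y) ∈ S →
      s(Sum.inl x, Sum.inr y) ∉ c.edges → Sum.inl x ∈ c.support → Sum.inr y ∈ c.support →
      ((i₂, b) ∈ S ∨ (i₃, a) ∈ S) ∨ (x = i ∧ y = j₀) := by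
    intro x y hxy hnotedge hxs hys
    rw [hsupp] at hxs hys
    simp only [List.mem_cons, List.not_mem_nil, or_false, Sum.inl.injEq, Sum.inr.injEq,
      reduceCtorEq, false_or, or_false] at hxs hys
    rw [hedges] at hnotedge
    have hx' : x = i₂ ∨ x = i₃ ∨ x = i := by tauto
    have hy' : y = j₀ ∨ y = b ∨ y = a := by tauto
    clear hxs hys
    rcases hx' with rfl | rfl | rfl <;> rcases hy' with rfl | rfl | rfl
    · exact absurd (by simp) hnotedge
    · exact Or.inl (Or.inl hxy)
    · exact absurd (by simp) hnotedge
    · exact absurd (by simp) hnotedge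
    · exact absurd (by simp) hnotedge
    · exact Or.inl (Or.inr hxy)
    · exact Or.inr ⟨rfl, rfl⟩
    · exact absurd (by simp) hnotedge
    · exact absurd (by simp) hnotedge
  have hcase : ∀ e, IsChord (qiGraph m n S) c e →
      ((i₂, b) ∈ S ∨ (i₃, a) ∈ S) ∨ e = s(Sum.inl i, Sum.inr j₀) := by
    intro e he
    obtain ⟨hadj, hnotedge, hsup⟩ := he
    induction e using Sym2.ind with
    | _ u v =>
      rw [SimpleGraph.mem_edgeSet, qiGraph, SimpleGraph.fromRel_adj] at hadj
      obtain ⟨huv, hrel⟩ := hadj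
      rcases hrel with ⟨p, hp, rfl, rfl⟩ | ⟨p, hp, rfl, rfl⟩
      · rcases core p.1 p.2 hp hnotedge (hsup _ (by simp)) (hsup _ (by simp)) with h | ⟨h1', h2'⟩
        · exact Or.inl h
        · right; rw [h1', h2']
      · rw [Sym2.eq_swap] at hnotedge
        rcases core p.1 p.2 hp hnotedge (hsup _ (by simp)) (hsup _ (by simp)) with h | ⟨h1', h2'⟩
        · exact Or.inl h
        · right; rw [Sym2.eq_swap, h1', h2']
  rcases hcase e₁ hc₁ with h | h1eq
  · exact h
  rcases hcase e₂ hc₂ with h | h2eq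
  · exact h
  exact absurd (h1eq.trans h2eq.symm) hne

lemma row_col_mem {C : Finset (Fin m × Fin n)} (h : IsGridClique S C) {i i' : Fin m} {j : Fin n}
    (hij : (i, j) ∈ C) (hi' : i' ∈ rowsOf C) : (i', j) ∈ C := by
  obtain ⟨p, hp, rfl⟩ := mem_image.1 hi'
  exact h.2.2 p hp (i, j) hij

lemma max_ext {D : Finset (Fin m × Fin n)} (hD : IsMaxClique S D) (i₃ : Fin m)
    (hall : ∀ p ∈ D, (i₃, p.2) ∈ S) : i₃ ∈ rowsOf D := by
  obtain ⟨⟨⟨p₀, hp₀⟩, hDS, hcl⟩, hmax⟩ := hD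
  set C := D ∪ D.image (fun p => (i₃, p.2)) with hC
  have hsub : D ⊆ C := subset_union_left
  have hclique : IsGridClique S C := by
    refine ⟨⟨p₀, hsub hp₀⟩, ?_, ?_⟩
    · intro p hp
      rcases mem_union.1 hp with h | h
      · exact hDS h
      · obtain ⟨q, hq, rfl⟩ := mem_image.1 h
        exact hall q hq
    · intro p hp q hq
      obtain ⟨q', hq', hq2⟩ : ∃ q' ∈ D, q'.2 = q.2 := by
        rcases mem_union.1 hq with h | h
        · exact ⟨q, h, rfl⟩
        · obtain ⟨q', hq', rfl⟩ := mem_image.1 h; exact ⟨q', hq', rfl⟩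
      rcases mem_union.1 hp with h | h
      · exact hsub (hq2 ▸ hcl p h q' hq')
      · obtain ⟨p', hp', rfl⟩ := mem_image.1 h
        exact mem_union_right _ (mem_image.2 ⟨q', hq', by simp [hq2]⟩)
  have hDC : D = C := hmax C hclique hsub
  have : (i₃, p₀.2) ∈ C := mem_union_right _ (mem_image.2 ⟨p₀, hp₀, rfl⟩)
  rw [← hDC] at this
  exact mem_image.2 ⟨(i₃, p₀.2), this, rfl⟩

lemma rows_chain (hS : DoublyChordalBipartite (qiGraph m n S)) {j₀ : Fin n} {D E : Finset (Fin m × Fin n)}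
    (hD : IsMaxClique S D) (hE : IsMaxClique S E) {i : Fin m}
    (hiD : (i, j₀) ∈ D) (hiE : (i, j₀) ∈ E) :
    rowsOf D ⊆ rowsOf E ∨ rowsOf E ⊆ rowsOf D := by
  by_contra hcon
  push_neg at hcon
  obtain ⟨hDE, hED⟩ := hcon
  obtain ⟨i₂, hi₂D, hi₂E⟩ := not_subset.1 hDE
  obtain ⟨i₃, hi₃E, hi₃D⟩ := not_subset.1 hED
  obtain ⟨pa, hpa, hpa3⟩ : ∃ p ∈ D, (i₃, p.2) ∉ S := by
    by_contra h; push_neg at h; exact hi₃D (max_ext hD i₃ h)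
  obtain ⟨pb, hpb, hpb2⟩ : ∃ p ∈ E, (i₂, p.2) ∉ S := by
    by_contra h; push_neg at h; exact hi₂E (max_ext hE i₂ h)
  have hclD := hD.1.2.2
  have hclE := hE.1.2.2
  have hDS := hD.1.2.1
  have hES := hE.1.2.1
  have k1 : (i, j₀) ∈ S := hDS hiD
  have k2 : (i₂, j₀) ∈ S := hDS (row_col_mem hD.1 hiD hi₂D)
  have k3 : (i₃, j₀) ∈ S := hES (row_col_mem hE.1 hiE hi₃E)
  have k4 : (i, pa.2) ∈ S := hDS (hclD (i, j₀) hiD pa hpa)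
  have k5 : (i₂, pa.2) ∈ S := hDS (hclD _ (row_col_mem hD.1 hiD hi₂D) pa hpa)
  have k6 : (i, pb.2) ∈ S := hES (hclE (i, j₀) hiE pb hpb)
  have k7 : (i₃, pb.2) ∈ S := hES (hclE _ (row_col_mem hE.1 hiE hi₃E) pb hpb)
  rcases key hS k1 k2 k3 k4 k5 k6 k7 with h | h
  · exact hpb2 h
  · exact hpa3 h

end Aux

/-- if `Dα ⋖ Dβ` in `P(j₀)`, then the set
`R_α = {D ∈ Max(S) : D ∩ N_{j₀} ≠ ∅, rows(D) ⊆ rows(Dα)} ∪ {E : N_{j₀} ∩ Dα ∩ E = ∅}`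
equals
`R̄_β = {D ∈ Max(S) : D ∩ N_{j₀} ≠ ∅, rows(D) ⊊ rows(Dβ)} ∪ {E : N_{j₀} ∩ Dβ ∩ E = ∅}`. -/
theorem maxCliques_factor_out (m n : ℕ) (S : Finset (Fin m × Fin n))
    (hS : DoublyChordalBipartite (qiGraph m n S)) (j₀ : Fin n)
    (Dα Dβ : Finset (Fin m × Fin n)) (hcov : PCovers S j₀ Dβ Dα) :
    (maxCliques S).filter (fun D =>
        ((∃ i, (i, j₀) ∈ D) ∧ rowsOf D ⊆ rowsOf Dα) ∨
          ∀ i : Fin m, ¬ ((i, j₀) ∈ Dα ∧ (i, j₀) ∈ D)) =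
    (maxCliques S).filter (fun D =>
        ((∃ i, (i, j₀) ∈ D) ∧ rowsOf D ⊂ rowsOf Dβ) ∨
          ∀ i : Fin m, ¬ ((i, j₀) ∈ Dβ ∧ (i, j₀) ∈ D)) := by
  obtain ⟨⟨hαmax, iα, hiα⟩, ⟨hβmax, iβ, hiβ⟩, hss, hnog⟩ := hcov
  ext D
  simp only [mem_filter, and_congr_right_iff]
  intro hDmem
  have hDmax : IsMaxClique S D := by
    have := hDmem
    simp only [maxCliques, mem_filter] at this
    exact this.2
  constructor
  · rintro (⟨⟨i, hi⟩, hsub⟩ | h)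
    · exact Or.inl ⟨⟨i, hi⟩, lt_of_le_of_lt hsub hss⟩
    · by_cases hex : ∃ i, (i, j₀) ∈ Dβ ∧ (i, j₀) ∈ D
      · obtain ⟨i, hiβD, hiD⟩ := hex
        left
        refine ⟨⟨i, hiD⟩, ?_⟩
        have hnsup : ¬ rowsOf Dβ ⊆ rowsOf D := by
          intro hsup
          have hiαR : iα ∈ rowsOf D :=
            hsup (hss.1 (mem_image.2 ⟨(iα, j₀), hiα, rfl⟩))
          exact h iα ⟨hiα, row_col_mem hDmax.1 hiD hiαR⟩
        rcases rows_chain hS hDmax hβmax hiD hiβD with hsub | hsub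
        · exact Finset.ssubset_def.2 ⟨hsub, hnsup⟩
        · exact absurd hsub hnsup
      · push_neg at hex
        exact Or.inr fun i hi => hex i hi.1 hi.2
  · rintro (⟨⟨i, hi⟩, hsub⟩ | h)
    · by_cases hex : ∃ i', (i', j₀) ∈ Dα ∧ (i', j₀) ∈ D
      · obtain ⟨i', hiα', hiD'⟩ := hex
        left
        refine ⟨⟨i, hi⟩, ?_⟩
        by_cases hra : rowsOf D ⊆ rowsOf Dα
        · exact hra
        · exfalso
          rcases rows_chain hS hDmax hαmax hiD' hiα' with hc | hc
          · exact hra hc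
          · exact hnog ⟨D, ⟨hDmax, ⟨i, hi⟩⟩, Finset.ssubset_def.2 ⟨hc, hra⟩, hsub⟩
      · push_neg at hex
        exact Or.inr fun i hi => hex i hi.1 hi.2
    · right
      intro i hi
      have hiR : i ∈ rowsOf Dβ := hss.1 (mem_image.2 ⟨(i, j₀), hi.1, rfl⟩)
      exact h i ⟨row_col_mem hβmax.1 hiβ hiR, hi.2⟩
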